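/- Consider permutations of {1,...,t} in bijection with 'worm diagrams': for each sigma in S_t there is exactly one worm diagram of size t whose i-th worm has length t+1-sigma(i). Hence the number of worm diagrams of size t (equivalently, of full exceptional sequences of A_t-modules) is t!. -/

import Mathlib

/-!
After `k` steps a worm lies on the antidiagonal `x + y = t + 1 - k`, which has `t - k` lattice
points, and exactly `t - k` worms (those with at least `k` steps) get that far; so they fill it.
A step moves a worm left by at most one column, so worms cannot cross: on every antidiagonal
they stand in the order of their indices. This pins down every vertex, hence the whole diagram,
in terms of the worm lengths alone. Conversely, placing the worms in this order does produce a
worm diagram for every permutation of the lengths, so worm diagrams correspond to permutations.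
-/

/-- The vertex list of a worm: starting from `start`, each step moves one lattice
unit left (`true`) or down (`false`); equivalently, read backwards, each step of the
worm goes right or up. -/
def wormPath : ℤ × ℤ → List Bool → List (ℤ × ℤ)
  | p, [] => [p]
  | p, b :: rest =>
      p :: wormPath (if b then (p.1 - 1, p.2) else (p.1, p.2 - 1)) rest

/-- A worm diagram of size `t`: a graph on the lattice triangle
`{(m,n) : m,n ≥ 1, m+n ≤ t+1}` whose edges lie on grid lines and whose connected
components are `t` monotone lattice paths (worms) of lengths `1, 2, ..., t`
(in some order), the `i`-th worm starting at the diagonal point `(i, t+1-i)`. -/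
structure WormDiagram (t : ℕ) where
  /-- the steps of the `i`-th worm (here `i : Fin t` encodes the worm with
  diagonal point `(i+1, t-i)`) -/
  steps : Fin t → List Bool
  /-- the worm lengths (numbers of vertices) are `1, ..., t` in some order -/
  lengths_perm : ∃ π : Equiv.Perm (Fin t), ∀ i, (steps i).length = (π i : ℕ)
  /-- the worms exhaust exactly the triangle -/
  cover : ∀ p : ℤ × ℤ,
    (1 ≤ p.1 ∧ 1 ≤ p.2 ∧ p.1 + p.2 ≤ (t : ℤ) + 1) ↔
      ∃ i : Fin t, p ∈ wormPath (((i : ℕ) : ℤ) + 1, (t : ℤ) - (i : ℕ)) (steps i)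
  /-- distinct worms are disjoint -/
  disjoint : ∀ i j : Fin t, i ≠ j →
    ∀ p : ℤ × ℤ, p ∈ wormPath (((i : ℕ) : ℤ) + 1, (t : ℤ) - (i : ℕ)) (steps i) →
      p ∉ wormPath (((j : ℕ) : ℤ) + 1, (t : ℤ) - (j : ℕ)) (steps j)

open Finset

namespace List

lemma count_true_take_add_one {L : List Bool} {k : ℕ} (hk : k < L.length) :
    (L.take (k + 1)).count true = (L.take k).count true + L[k].toNat := by
  rw [take_add_one, count_append, getElem?_eq_getElem hk]
  cases L[k] <;> rfl

lemma eq_of_count_true_take {L L' : List Bool} (hlen : L.length = L'.length)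
    (hcount : ∀ k ≤ L.length, (L.take k).count true = (L'.take k).count true) : L = L' := by
  refine ext_getElem hlen fun k hk hk' => ?_
  have h := hcount (k + 1) hk
  rw [count_true_take_add_one hk, count_true_take_add_one hk', hcount k hk.le] at h
  cases hL : L[k] <;> cases hL' : L'[k] <;> simp_all

lemma count_true_map_range_decide_lt (f : ℕ → ℕ)
    (hf : ∀ k, f (k + 1) ≤ f k ∧ f k ≤ f (k + 1) + 1) (m : ℕ) :
    ((range m).map fun k => decide (f (k + 1) < f k)).count true + f m = f 0 := by
  induction m with
  | zero => simp
  | succ m ih =>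
    obtain ⟨h₁, h₂⟩ := hf m
    rw [range_succ, map_append, count_append]
    by_cases h : f (m + 1) < f m <;> simp [h] <;> omega

end List

def wormVertex (p : ℤ × ℤ) (L : List Bool) (k : ℕ) : ℤ × ℤ :=
  (p.1 - (L.take k).count true, p.2 - (L.take k).count false)

lemma mem_wormPath_iff {p q : ℤ × ℤ} {L : List Bool} :
    q ∈ wormPath p L ↔ ∃ k ≤ L.length, wormVertex p L k = q := by
  induction L generalizing p with
  | nil => simp [wormPath, wormVertex, eq_comm]
  | cons b L ih =>
    simp only [wormPath, List.mem_cons, ih, List.length_cons]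
    constructor
    · rintro (rfl | ⟨k, hk, rfl⟩)
      · exact ⟨0, by simp, by simp [wormVertex]⟩
      · refine ⟨k + 1, by omega, ?_⟩
        cases b <;> simp [wormVertex] <;> ring_nf
    · rintro ⟨_ | k, hk, rfl⟩
      · simp [wormVertex]
      · refine Or.inr ⟨k, by omega, ?_⟩
        cases b <;> simp [wormVertex] <;> ring_nf

lemma wormVertex_fst_add_snd {p : ℤ × ℤ} {L : List Bool} {k : ℕ} (hk : k ≤ L.length) :
    (wormVertex p L k).1 + (wormVertex p L k).2 = p.1 + p.2 - k := by
  have h := List.count_true_add_count_false (L.take k)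
  rw [List.length_take, min_eq_left hk] at h
  simp only [wormVertex]
  omega

lemma wormVertex_fst_succ {p : ℤ × ℤ} {L : List Bool} {k : ℕ} (hk : k < L.length) :
    (wormVertex p L (k + 1)).1 ≤ (wormVertex p L k).1 ∧
      (wormVertex p L k).1 ≤ (wormVertex p L (k + 1)).1 + 1 := by
  have h := L[k].toNat_le
  simp only [wormVertex, List.count_true_take_add_one hk]
  omega

namespace Finset

lemma image_eq_Icc_of_injOn {α : Type*} {s : Finset α} {f : α → ℤ} (hf : Set.InjOn f s)
    (hmaps : ∀ i ∈ s, f i ∈ Icc 1 (#s : ℤ)) : s.image f = Icc 1 (#s : ℤ) := by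
  refine eq_of_subset_of_card_le (fun v hv => ?_) ?_
  · obtain ⟨i, hi, rfl⟩ := mem_image.1 hv
    exact hmaps i hi
  · rw [card_image_of_injOn hf, Int.card_Icc]
    omega

variable {α : Type*} [LinearOrder α] {s : Finset α}

lemma card_filter_le_eq_of_strictMonoOn {f : α → ℤ} (hf : StrictMonoOn f s)
    (hmaps : ∀ i ∈ s, f i ∈ Icc 1 (#s : ℤ)) {i : α} (hi : i ∈ s) :
    (#{j ∈ s | j ≤ i} : ℤ) = f i := by
  have himage : {j ∈ s | j ≤ i}.image f = Icc 1 (f i) := by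
    rw [← filter_congr fun j hj => hf.le_iff_le hj hi, ← filter_image (p := (· ≤ f i)),
      image_eq_Icc_of_injOn hf.injOn hmaps]
    ext v
    simp only [mem_filter, mem_Icc]
    have := (mem_Icc.1 (hmaps i hi)).2
    omega
  rw [← card_image_of_injOn (hf.injOn.mono (filter_subset _ s)), himage, Int.card_Icc]
  have := (mem_Icc.1 (hmaps i hi)).1
  omega

lemma strictMonoOn_card_filter_le : StrictMonoOn (fun i => (#{j ∈ s | j ≤ i} : ℤ)) s := by
  intro i _ j hj hij
  refine Nat.cast_lt.2 (card_lt_card ⟨fun k hk => ?_, fun h => ?_⟩)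
  · simp only [mem_filter] at hk ⊢
    exact ⟨hk.1, hk.2.trans hij.le⟩
  · exact absurd (mem_filter.1 (h (mem_filter.2 ⟨hj, le_rfl⟩))).2 (not_le.2 hij)

lemma card_filter_le_mem_Icc {i : α} (hi : i ∈ s) : (#{j ∈ s | j ≤ i} : ℤ) ∈ Icc 1 (#s : ℤ) := by
  rw [mem_Icc, Nat.one_le_cast, Nat.cast_le, Nat.one_le_iff_ne_zero, Ne, card_eq_zero]
  exact ⟨nonempty_iff_ne_empty.1 ⟨i, mem_filter.2 ⟨hi, le_rfl⟩⟩, card_filter_le _ _⟩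

lemma exists_card_filter_le_eq {m : ℤ} (hm : m ∈ Icc 1 (#s : ℤ)) :
    ∃ i ∈ s, (#{j ∈ s | j ≤ i} : ℤ) = m := by
  rw [← image_eq_Icc_of_injOn strictMonoOn_card_filter_le.injOn
    fun _ => card_filter_le_mem_Icc] at hm
  simpa using hm

end Finset

variable {t : ℕ}

/-- The worms with at least `k` steps, i.e. those meeting the antidiagonal `x + y = t + 1 - k`,
when worm `j` has `π j` steps. -/
def reach (π : Equiv.Perm (Fin t)) (k : ℕ) : Finset (Fin t) := {j | k ≤ (π j : ℕ)}

/-- The `x`-coordinate of worm `i` on the antidiagonal `x + y = t + 1 - k`: the worms meeting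
that antidiagonal occupy its `t - k` lattice points from left to right in the order of their
indices. -/
def column (π : Equiv.Perm (Fin t)) (k : ℕ) (i : Fin t) : ℕ := #{j ∈ reach π k | j ≤ i}

section Reach

variable {π : Equiv.Perm (Fin t)} {k : ℕ} {i : Fin t}

lemma mem_reach : i ∈ reach π k ↔ k ≤ (π i : ℕ) := by
  simp [reach]

lemma card_reach : #(reach π k) = t - k := by
  have hlt := card_filter_add_card_filter_not (s := univ) fun v : Fin t => (v : ℕ) < k
  simp only [Fin.card_filter_val_lt, not_lt, card_univ, Fintype.card_fin] at hlt
  rw [card_equiv π (t := {v : Fin t | k ≤ (v : ℕ)}) fun j => by simp [reach]]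
  omega

lemma reach_succ_subset : reach π (k + 1) ⊆ reach π k := fun j hj => by
  rw [mem_reach] at hj ⊢
  omega

lemma card_reach_sdiff_reach_succ_le : #(reach π k \ reach π (k + 1)) ≤ 1 := by
  refine card_le_one.2 fun a ha b hb => π.injective (Fin.ext ?_)
  simp only [mem_sdiff, mem_reach] at ha hb
  omega

lemma column_zero : column π 0 i = (i : ℕ) + 1 := by
  simp [column, reach, filter_ge_eq_Iic]

lemma column_succ_le : column π (k + 1) i ≤ column π k i :=
  card_le_card (filter_subset_filter _ reach_succ_subset)

lemma column_le_column_succ_add_one : column π k i ≤ column π (k + 1) i + 1 := by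
  have hsub : {j ∈ reach π k | j ≤ i} ⊆
      {j ∈ reach π (k + 1) | j ≤ i} ∪ (reach π k \ reach π (k + 1)) := fun j hj => by
    simp only [mem_union, mem_filter, mem_sdiff] at hj ⊢
    tauto
  calc column π k i ≤ column π (k + 1) i + #(reach π k \ reach π (k + 1)) :=
        (card_le_card hsub).trans (card_union_le _ _)
    _ ≤ column π (k + 1) i + 1 := by gcongr; exact card_reach_sdiff_reach_succ_le

lemma column_mem_Icc (hi : i ∈ reach π k) : (column π k i : ℤ) ∈ Icc 1 ((t - k : ℕ) : ℤ) :=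
  card_reach (π := π) ▸ card_filter_le_mem_Icc hi

end Reach

section Construction

variable {π : Equiv.Perm (Fin t)} {k : ℕ} {i : Fin t}

def stepsOfPerm (π : Equiv.Perm (Fin t)) (i : Fin t) : List Bool :=
  (List.range (π i)).map fun k => decide (column π (k + 1) i < column π k i)

lemma length_stepsOfPerm : (stepsOfPerm π i).length = π i := by
  simp [stepsOfPerm]

lemma count_true_take_stepsOfPerm (hk : k ≤ π i) :
    ((stepsOfPerm π i).take k).count true + column π k i = (i : ℕ) + 1 := by
  rw [stepsOfPerm, ← List.map_take, List.take_range, min_eq_left hk, ← column_zero (π := π)]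
  exact List.count_true_map_range_decide_lt (column π · i)
    (fun _ => ⟨column_succ_le, column_le_column_succ_add_one⟩) k

lemma mem_wormPath_stepsOfPerm {q : ℤ × ℤ} :
    q ∈ wormPath (((i : ℕ) : ℤ) + 1, (t : ℤ) - (i : ℕ)) (stepsOfPerm π i) ↔
      ∃ k ≤ (π i : ℕ), ((column π k i : ℤ), (t : ℤ) + 1 - k - column π k i) = q := by
  rw [mem_wormPath_iff, length_stepsOfPerm]
  refine exists_congr fun k => and_congr_right fun hk => ?_
  have hcount := count_true_take_stepsOfPerm hk
  have hsum := wormVertex_fst_add_snd (p := (((i : ℕ) : ℤ) + 1, (t : ℤ) - (i : ℕ)))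
    (length_stepsOfPerm (π := π) (i := i) ▸ hk)
  simp only [wormVertex] at hsum ⊢
  constructor <;> rintro rfl <;> ext <;> simp only <;> omega

def WormDiagram.ofPerm (π : Equiv.Perm (Fin t)) : WormDiagram t where
  steps := stepsOfPerm π
  lengths_perm := ⟨π, fun _ => length_stepsOfPerm⟩
  cover q := by
    simp only [mem_wormPath_stepsOfPerm]
    constructor
    · rintro ⟨hx, hy, hxy⟩
      lift t + 1 - (q.1 + q.2) to ℕ using (by omega) with k hk
      obtain ⟨i, hi, hcol⟩ := exists_card_filter_le_eq (s := reach π k) (m := q.1)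
        (by rw [card_reach, mem_Icc]; omega)
      exact ⟨i, k, mem_reach.1 hi, Prod.ext hcol (by simp only [column] at hcol ⊢; omega)⟩
    · rintro ⟨i, k, hk, rfl⟩
      have hcol := mem_Icc.1 (column_mem_Icc (mem_reach.2 hk))
      have := (π i).isLt
      simp only
      omega
  disjoint i j hij q := by
    simp only [mem_wormPath_stepsOfPerm]
    rintro ⟨k, hk, rfl⟩ ⟨l, hl, h⟩
    simp only [Prod.mk.injEq] at h
    obtain rfl : l = k := by omega
    exact hij (strictMonoOn_card_filter_le.injOn (mem_reach.2 hk) (mem_reach.2 hl) h.1.symm)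

lemma WormDiagram.ofPerm_steps_length : ((WormDiagram.ofPerm π).steps i).length = π i :=
  length_stepsOfPerm

end Construction

namespace WormDiagram

variable (W : WormDiagram t) {π : Equiv.Perm (Fin t)} {k : ℕ} {i j : Fin t}

def vertex (i : Fin t) (k : ℕ) : ℤ × ℤ :=
  wormVertex (((i : ℕ) : ℤ) + 1, (t : ℤ) - (i : ℕ)) (W.steps i) k

lemma vertex_mem_wormPath (hk : k ≤ (W.steps i).length) :
    W.vertex i k ∈ wormPath (((i : ℕ) : ℤ) + 1, (t : ℤ) - (i : ℕ)) (W.steps i) :=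
  mem_wormPath_iff.2 ⟨k, hk, rfl⟩

lemma vertex_fst_add_snd (hk : k ≤ (W.steps i).length) :
    (W.vertex i k).1 + (W.vertex i k).2 = t + 1 - k := by
  rw [vertex, wormVertex_fst_add_snd hk]
  ring

lemma vertex_fst_mem_Icc (hk : k ≤ (W.steps i).length) :
    (W.vertex i k).1 ∈ Icc 1 ((t - k : ℕ) : ℤ) := by
  have hmem := (W.cover _).2 ⟨i, W.vertex_mem_wormPath hk⟩
  have hsum := W.vertex_fst_add_snd hk
  rw [mem_Icc]
  omega

lemma vertex_fst_ne (hij : i ≠ j) (hi : k ≤ (W.steps i).length) (hj : k ≤ (W.steps j).length) :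
    (W.vertex i k).1 ≠ (W.vertex j k).1 := by
  intro hfst
  have hsnd : (W.vertex i k).2 = (W.vertex j k).2 := by
    have := W.vertex_fst_add_snd hi
    have := W.vertex_fst_add_snd hj
    omega
  exact W.disjoint i j hij _ (W.vertex_mem_wormPath hi)
    (Prod.ext hfst hsnd ▸ W.vertex_mem_wormPath hj)

/-- Worms never cross: moving down one antidiagonal shifts each worm left by at most one column,
so worms keep their left-to-right order, and disjointness keeps them apart. -/
lemma vertex_fst_strictMonoOn (hπ : ∀ i, (W.steps i).length = π i) (k : ℕ) :
    StrictMonoOn (fun i => (W.vertex i k).1) (reach π k) := by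
  induction k with
  | zero =>
    intro i _ j _ hij
    simpa [vertex, wormVertex] using hij
  | succ k ih =>
    intro i hi j hj hij
    have hlt := ih (reach_succ_subset hi) (reach_succ_subset hj) hij
    rw [mem_coe, mem_reach, ← hπ] at hi hj
    have hstep_i := wormVertex_fst_succ (p := (((i : ℕ) : ℤ) + 1, (t : ℤ) - (i : ℕ))) hi
    have hstep_j := wormVertex_fst_succ (p := (((j : ℕ) : ℤ) + 1, (t : ℤ) - (j : ℕ))) hj
    have hne := W.vertex_fst_ne hij.ne hi hj
    simp only [vertex] at hlt hne ⊢
    omega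

lemma vertex_fst_eq_column (hπ : ∀ i, (W.steps i).length = π i) (hk : k ≤ π i) :
    (W.vertex i k).1 = column π k i :=
  (card_filter_le_eq_of_strictMonoOn (W.vertex_fst_strictMonoOn hπ k)
    (fun j hj => card_reach (π := π) ▸ W.vertex_fst_mem_Icc (hπ j ▸ mem_reach.1 hj))
    (mem_reach.2 hk)).symm

lemma eq_ofPerm (hπ : ∀ i, (W.steps i).length = π i) : W = ofPerm π := by
  have hsteps : W.steps = stepsOfPerm π := funext fun i =>
    List.eq_of_count_true_take (by rw [hπ, length_stepsOfPerm]) fun k hk => by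
      rw [hπ] at hk
      have hcol := W.vertex_fst_eq_column hπ hk
      have hcount := count_true_take_stepsOfPerm hk
      simp only [vertex, wormVertex] at hcol
      omega
  cases W
  cases hsteps
  rfl

lemma ofPerm_bijective : Function.Bijective (ofPerm : Equiv.Perm (Fin t) → WormDiagram t) := by
  refine ⟨fun π₁ π₂ h => Equiv.ext fun i => Fin.ext ?_, fun W => ?_⟩
  · rw [← ofPerm_steps_length (π := π₁), h, ofPerm_steps_length]
  · obtain ⟨π, hπ⟩ := W.lengths_perm
    exact ⟨π, (W.eq_ofPerm hπ).symm⟩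

end WormDiagram

/-- For each `σ ∈ S_t` there is exactly one worm diagram of size `t` whose `i`-th worm
has length `t + 1 - σ(i)` (with `σ(i) ∈ {1,...,t}` encoded as `(σ i : ℕ) + 1`);
hence the number of worm diagrams of size `t` (equivalently, of full exceptional
sequences of `A_t`-modules) is `t!`. -/
theorem wormDiagram_bijection (t : ℕ) :
    (∀ σ : Equiv.Perm (Fin t),
      ∃! W : WormDiagram t, ∀ i : Fin t,
        (W.steps i).length + 1 = t - (σ i : ℕ)) ∧
    Nat.card (WormDiagram t) = Nat.factorial t := by
  have hrev (σ : Equiv.Perm (Fin t)) (i : Fin t) :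
      ((σ.trans Fin.revPerm) i : ℕ) + 1 = t - σ i := by
    simp only [Equiv.trans_apply, Fin.revPerm_apply, Fin.val_rev]
    omega
  refine ⟨fun σ => ⟨.ofPerm (σ.trans Fin.revPerm), fun i => ?_,
    fun W hW => W.eq_ofPerm fun i => ?_⟩, ?_⟩
  · rw [WormDiagram.ofPerm_steps_length, hrev]
  · have := hrev σ i
    have := hW i
    omega
  · rw [← Nat.card_eq_of_bijective _ WormDiagram.ofPerm_bijective, Nat.card_perm,
      Nat.card_eq_fintype_card, Fintype.card_fin]
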